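/- Let n ≥ 3 be a natural number and let C be an equitable proper coloring of the sunflower graph SF_n that uses exactly 4 colors, with colors indexed so that the class sizes are non-increasing. Then the equitable coloring variance of C equals (5n^2+7n)/(2n+1)^2 if n is even, and (5n^2+3n−2)/(2n+1)^2 if n is odd. -/
import Mathlib


open Finset

/-- The size of the color class of color `i` under the coloring `c`. -/
def classSize {V : Type*} [Fintype V] {k : ℕ} (c : V → Fin k) (i : Fin k) : ℕ :=
  (Finset.univ.filter (fun v => c v = i)).card

/-- The equitable coloring mean `μ = (∑ i·θ_i)/N` (colors indexed `1,…,k`). -/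
def eqMean {V : Type*} [Fintype V] {k : ℕ} (c : V → Fin k) : ℚ :=
  (∑ i : Fin k, (((i : ℕ) : ℚ) + 1) * (classSize c i : ℚ)) / (Fintype.card V : ℚ)

/-- The equitable coloring variance `σ² = (∑ i²·θ_i)/N − μ²`. -/
def eqVar {V : Type*} [Fintype V] {k : ℕ} (c : V → Fin k) : ℚ :=
  (∑ i : Fin k, (((i : ℕ) : ℚ) + 1) ^ 2 * (classSize c i : ℚ)) / (Fintype.card V : ℚ)
    - (eqMean c) ^ 2

/-- The sunflower graph `SF_n`: the wheel graph `W_n` (center `none`, rim `some (Sum.inl i)`)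
together with vertices `u_i = some (Sum.inr i)`, each adjacent to `v_i` and `v_{i+1}`. -/
def sunflowerGraph (n : ℕ) : SimpleGraph (Option (Fin n ⊕ Fin n)) :=
  SimpleGraph.fromRel (fun a b =>
    match a, b with
    | none, some (Sum.inl _) => True
    | some (Sum.inl i), some (Sum.inl j) => j.val = (i.val + 1) % n
    | some (Sum.inr i), some (Sum.inl j) => j = i ∨ j.val = (i.val + 1) % n
    | _, _ => False)

theorem sunflower_eqVar (n : ℕ) (hn : 3 ≤ n)
    (c : Option (Fin n ⊕ Fin n) → Fin (4))
    (hproper : ∀ u v, (sunflowerGraph n).Adj u v → c u ≠ c v)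
    (hsurj : Function.Surjective c)
    (hequit : ∀ i j : Fin (4), classSize c i ≤ classSize c j + 1)
    (hmono : ∀ i j : Fin (4), i ≤ j → classSize c j ≤ classSize c i) :
    eqVar c = if Even n then (5 * (n : ℚ) ^ 2 + 7 * (n : ℚ)) / (2 * (n : ℚ) + 1) ^ 2
      else (5 * (n : ℚ) ^ 2 + 3 * (n : ℚ) - 2) / (2 * (n : ℚ) + 1) ^ 2 := by
  classical
  have hcard : Fintype.card (Option (Fin n ⊕ Fin n)) = 2*n+1 := by
    simp [Fintype.card_option, Fintype.card_sum]; omega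
  have hsum : ∑ i : Fin 4, classSize c i = 2*n+1 := by
    rw [show (2*n+1) = Fintype.card (Option (Fin n ⊕ Fin n)) from hcard.symm,
      ← Finset.card_univ]
    exact (Finset.card_eq_sum_card_fiberwise (fun x _ => Finset.mem_univ (c x))).symm
  rw [Fin.sum_univ_four] at hsum
  have h01 := hmono 0 1 (by decide)
  have h12 := hmono 1 2 (by decide)
  have h23 := hmono 2 3 (by decide)
  have heq := hequit 0 3
  have hN : (2*(n:ℚ)+1) ≠ 0 := by positivity
  rcases Nat.even_or_odd n with he | ho
  · obtain ⟨m, hm⟩ := he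
    have hv : classSize c 0 = m+1 ∧ classSize c 1 = m ∧ classSize c 2 = m ∧
        classSize c 3 = m := by omega
    rw [if_pos ⟨m, hm⟩]
    simp only [eqVar, eqMean, hcard, Fin.sum_univ_four, show ((3:Fin 4):ℕ) = 3 from rfl, show ((2:Fin 4):ℕ) = 2 from rfl, show ((1:Fin 4):ℕ) = 1 from rfl, show ((0:Fin 4):ℕ) = 0 from rfl, hv.1, hv.2.1, hv.2.2.1, hv.2.2.2]
    have hnm : (n:ℚ) = 2*(m:ℚ) := by push_cast [hm]; ring
    push_cast
    rw [hnm]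
    have hM : (2*(2*(m:ℚ))+1) ≠ 0 := by positivity
    field_simp
    ring
  · obtain ⟨m, hm⟩ := ho
    have hv : classSize c 0 = m+1 ∧ classSize c 1 = m+1 ∧ classSize c 2 = m+1 ∧
        classSize c 3 = m := by omega
    rw [if_neg (by simp [hm, Nat.even_add_one, Nat.even_mul])]
    simp only [eqVar, eqMean, hcard, Fin.sum_univ_four, show ((3:Fin 4):ℕ) = 3 from rfl, show ((2:Fin 4):ℕ) = 2 from rfl, show ((1:Fin 4):ℕ) = 1 from rfl, show ((0:Fin 4):ℕ) = 0 from rfl, hv.1, hv.2.1, hv.2.2.1, hv.2.2.2]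
    have hnm : (n:ℚ) = 2*(m:ℚ)+1 := by push_cast [hm]; ring
    push_cast
    rw [hnm]
    have hM : (2*(2*(m:ℚ)+1)+1) ≠ 0 := by positivity
    field_simp
    ring
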